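/- Let 0 < q_{l,0} ≤ q_{h,0} and set U_{l,0} = U_l(q_{l,0}, q_{h,0}) and U_{h,0} = U_h(q_{l,0}, q_{h,0}). Suppose 0 < q_l ≤ q_h ≤ q_h′ and that U_l(q_l, q_h) ≥ U_{l,0} and U_h(q_l, q_h) ≥ U_{h,0}. Then U_l(q_l, q_h′) ≥ U_{l,0}, U_h(q_l, q_h′) ≥ U_{h,0}, and (U_l(q_l, q_h′) − U_{l,0})·(U_h(q_l, q_h′) − U_{h,0}) ≥ (U_l(q_l, q_h) − U_{l,0})·(U_h(q_l, q_h) − U_{h,0}). In particular, the Nash bargaining objective restricted to the feasible set can never be decreased by increasing q_h, so any maximizer of the Nash bargaining problem has q_h equal to the maximal attainable quality. -/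

import Mathlib

/-!
Writing `x = q_l / q_h ∈ (0, 1]`, both utilities factor through `φ x = (1 - x) / (4 - x)²`:
`U_l = q_l · φ x` and `U_h = 4 q_h · φ x`. Since `φ` is nonnegative and antitone on `[0, 1]`
and `x` decreases as `q_h` grows, both utilities are monotone in `q_h`. Hence raising `q_h`
keeps both gains over the disagreement point nonnegative and can only enlarge each of them,
so their product does not decrease.
-/

/-- Low-quality firm's equilibrium utility. -/
noncomputable def Ul (ql qh : ℝ) : ℝ := ql * qh * (qh - ql) / (4 * qh - ql) ^ 2

/-- High-quality firm's equilibrium utility. -/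
noncomputable def Uh (ql qh : ℝ) : ℝ := 4 * qh ^ 2 * (qh - ql) / (4 * qh - ql) ^ 2

open Set

noncomputable def utilityShape (x : ℝ) : ℝ := (1 - x) / (4 - x) ^ 2

lemma utilityShape_nonneg {x : ℝ} (hx : x ≤ 1) : 0 ≤ utilityShape x :=
  div_nonneg (by linarith) (sq_nonneg _)

lemma utilityShape_antitoneOn : AntitoneOn utilityShape (Icc 0 1) := by
  rintro y ⟨hy0, hy1⟩ x ⟨hx0, hx1⟩ hyx
  unfold utilityShape
  rw [div_le_div_iff₀ (by nlinarith) (by nlinarith)]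
  have hgap : (1 - y) * (4 - x) ^ 2 - (1 - x) * (4 - y) ^ 2 = (x - y) * (9 - (1 - x) * (1 - y)) := by
    ring
  have hgap_nonneg : 0 ≤ (x - y) * (9 - (1 - x) * (1 - y)) :=
    mul_nonneg (by linarith) (by nlinarith)
  linarith

lemma Ul_eq_mul_utilityShape (ql : ℝ) {qh : ℝ} (hqh : qh ≠ 0) :
    Ul ql qh = ql * utilityShape (ql / qh) := by
  unfold Ul utilityShape
  field_simp

lemma Uh_eq_mul_utilityShape (ql : ℝ) {qh : ℝ} (hqh : qh ≠ 0) :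
    Uh ql qh = 4 * qh * utilityShape (ql / qh) := by
  unfold Uh utilityShape
  field_simp

section Monotone

variable {ql : ℝ}

lemma div_mem_Icc_zero_one (hql : 0 < ql) {qh : ℝ} (hqh : qh ∈ Ici ql) : ql / qh ∈ Icc 0 1 :=
  ⟨div_nonneg hql.le (hql.le.trans hqh), (div_le_one (hql.trans_le hqh)).2 hqh⟩

lemma utilityShape_div_monotoneOn (hql : 0 < ql) :
    MonotoneOn (fun qh ↦ utilityShape (ql / qh)) (Ici ql) := fun _ ha _ hb hab ↦
  utilityShape_antitoneOn (div_mem_Icc_zero_one hql hb) (div_mem_Icc_zero_one hql ha)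
    (div_le_div_of_nonneg_left hql.le (hql.trans_le ha) hab)

lemma Ul_monotoneOn (hql : 0 < ql) : MonotoneOn (Ul ql) (Ici ql) := by
  intro a ha b hb hab
  rw [Ul_eq_mul_utilityShape ql (hql.trans_le ha).ne',
    Ul_eq_mul_utilityShape ql (hql.trans_le hb).ne']
  exact mul_le_mul_of_nonneg_left (utilityShape_div_monotoneOn hql ha hb hab) hql.le

lemma Uh_monotoneOn (hql : 0 < ql) : MonotoneOn (Uh ql) (Ici ql) := by
  intro a ha b hb hab
  rw [Uh_eq_mul_utilityShape ql (hql.trans_le ha).ne',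
    Uh_eq_mul_utilityShape ql (hql.trans_le hb).ne']
  have ha0 : 0 ≤ 4 * a := by linarith [mem_Ici.1 ha]
  exact mul_le_mul (by linarith) (utilityShape_div_monotoneOn hql ha hb hab)
    (utilityShape_nonneg (div_mem_Icc_zero_one hql ha).2) (ha0.trans (by linarith))

end Monotone

theorem nash_objective_increasing_in_qh
    (ql0 qh0 ql qh qh' : ℝ)
    (hql : 0 < ql) (hlh : ql ≤ qh) (hhh : qh ≤ qh')
    (hUl : Ul ql qh ≥ Ul ql0 qh0) (hUh : Uh ql qh ≥ Uh ql0 qh0) :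
    Ul ql qh' ≥ Ul ql0 qh0 ∧
    Uh ql qh' ≥ Uh ql0 qh0 ∧
    (Ul ql qh' - Ul ql0 qh0) * (Uh ql qh' - Uh ql0 qh0)
      ≥ (Ul ql qh - Ul ql0 qh0) * (Uh ql qh - Uh ql0 qh0) := by
  have hqh' : qh' ∈ Ici ql := hlh.trans hhh
  have hUl' : Ul ql qh ≤ Ul ql qh' := Ul_monotoneOn hql hlh hqh' hhh
  have hUh' : Uh ql qh ≤ Uh ql qh' := Uh_monotoneOn hql hlh hqh' hhh
  refine ⟨hUl.trans hUl', hUh.trans hUh', ?_⟩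
  exact mul_le_mul (by linarith) (by linarith) (sub_nonneg.2 hUh) (by linarith)
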